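/- Let B be the backward shift on ℓ^p(ℕ, ω) with sup_n ω_n/ω_{n+1} < ∞. If there exists a bounded subset A of ℓ^p(ℕ, ω) such that Orb(A, B) = {B^n x : n ∈ ℕ, x ∈ A} is weakly dense in ℓ^p(ℕ, ω), then liminf_{n→∞} ω_n = 0. -/

import Mathlib

/-!
Evaluation at `0` is weakly continuous and sends `B ^ n a` to `a n`, so weak density of the
orbit makes the values `a n` (`a ∈ A`) unbounded. Since `‖a n‖ * ω n ≤ ‖a‖` (the adjoint of
`B ^ n` sends the evaluation at `0` to a functional of norm `1 / ω n`) and `A` is bounded, the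
weights take arbitrarily small values, hence `liminf ω = 0` as they are positive.
-/

open MeasureTheory Filter Topology
open scoped ENNReal

noncomputable section

/-- The weighted measure on the index set `I` giving the point `k` mass `(ω k) ^ p`,
so that `Lp ℂ p (wMeasure p ω)` is the weighted sequence space `ℓ^p(I, ω)`. -/
def wMeasure {I : Type*} [MeasurableSpace I] (p : ENNReal) (ω : I → ℝ) : Measure I :=
  Measure.sum (fun k => ENNReal.ofReal ((ω k) ^ p.toReal) • Measure.dirac k)

theorem dense_image_of_dense_toWeakSpace_image {𝕜 E : Type*} [CommSemiring 𝕜]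
    [TopologicalSpace 𝕜] [ContinuousAdd 𝕜] [ContinuousConstSMul 𝕜 𝕜] [AddCommMonoid E]
    [Module 𝕜 E] [TopologicalSpace E] {S : Set E} (hS : Dense (toWeakSpace 𝕜 E '' S))
    {φ : E →L[𝕜] 𝕜} (hφ : DenseRange φ) : Dense (φ '' S) := by
  have hcont : Continuous fun x : WeakSpace 𝕜 E => φ ((toWeakSpace 𝕜 E).symm x) :=
    WeakBilin.eval_continuous (topDualPairing 𝕜 E).flip φ
  have hrange : DenseRange fun x : WeakSpace 𝕜 E => φ ((toWeakSpace 𝕜 E).symm x) := hφ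
  simpa [Set.image_image] using hrange.dense_image hcont hS

theorem Dense.exists_lt_norm {𝕜 : Type*} [NontriviallyNormedField 𝕜] {S : Set 𝕜}
    (hS : Dense S) (R : ℝ) : ∃ y ∈ S, R < ‖y‖ := by
  obtain ⟨x, hx⟩ := NormedField.exists_lt_norm 𝕜 (R + 1)
  obtain ⟨y, hyS, hxy⟩ := hS.exists_dist_lt x one_pos
  exact ⟨y, hyS, by linarith [norm_sub_norm_le x y, dist_eq_norm x y]⟩

section Weighted
variable {I : Type*} [MeasurableSpace I] [MeasurableSingletonClass I] {p : ℝ≥0∞} {ω : I → ℝ}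

theorem wMeasure_singleton (p : ℝ≥0∞) (ω : I → ℝ) (k : I) :
    wMeasure p ω {k} = ENNReal.ofReal (ω k ^ p.toReal) := by
  rw [wMeasure, Measure.sum_apply _ (measurableSet_singleton k), tsum_eq_single k]
  · simp
  · intro j hj
    simp [hj]

theorem wMeasure_singleton_ne_top (p : ℝ≥0∞) (ω : I → ℝ) (k : I) :
    wMeasure p ω {k} ≠ ∞ := by
  simp [wMeasure_singleton]

theorem wMeasure_singleton_ne_zero {k : I} (hk : 0 < ω k) : wMeasure p ω {k} ≠ 0 := by
  simpa [wMeasure_singleton] using Real.rpow_pos_of_pos hk _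

theorem Filter.EventuallyEq.apply_eq_of_wMeasure {k : I} (hk : 0 < ω k) {f g : I → ℂ}
    (h : f =ᵐ[wMeasure p ω] g) : f k = g k := by
  by_contra hne
  exact wMeasure_singleton_ne_zero hk
    (measure_mono_null (by simpa using hne) (ae_iff.mp h))

variable [Fact (1 ≤ p)]

theorem MeasureTheory.Lp.norm_apply_mul_le_norm (hp : p ≠ ∞) {k : I} (hk : 0 < ω k)
    (x : Lp ℂ p (wMeasure p ω)) : ‖x k‖ * ω k ≤ ‖x‖ := by
  have hp0 : p ≠ 0 := (zero_lt_one.trans_le Fact.out).ne'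
  have hpt : 0 < p.toReal := ENNReal.toReal_pos hp0 hp
  have hsingle : ({k} : Set I).indicator x = ({k} : Set I).indicator fun _ => x k := by
    ext j
    by_cases hj : j = k <;> simp [hj]
  have h := eLpNorm_indicator_le (μ := wMeasure p ω) (p := p) (s := {k}) x
  rw [hsingle, eLpNorm_indicator_const (measurableSet_singleton k) hp0 hp, wMeasure_singleton,
    ← ENNReal.ofReal_rpow_of_pos hk, ← ENNReal.rpow_mul, mul_one_div_cancel hpt.ne',
    ENNReal.rpow_one] at h
  rw [Lp.norm_def, ← ENNReal.toReal_ofReal hk.le, ← toReal_enorm, ← ENNReal.toReal_mul]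
  exact ENNReal.toReal_mono (Lp.eLpNorm_ne_top x) h

variable (p) in
def wEvalCLM (hp : p ≠ ∞) {k : I} (hk : 0 < ω k) : Lp ℂ p (wMeasure p ω) →L[ℂ] ℂ :=
  LinearMap.mkContinuous
    { toFun := fun x => x k
      map_add' := fun x y => (Lp.coeFn_add x y).apply_eq_of_wMeasure hk
      map_smul' := fun c x => (Lp.coeFn_smul c x).apply_eq_of_wMeasure hk }
    (ω k)⁻¹
    fun x => by
      rw [inv_mul_eq_div, le_div_iff₀ hk]
      exact Lp.norm_apply_mul_le_norm hp hk x

theorem wEvalCLM_apply (hp : p ≠ ∞) {k : I} (hk : 0 < ω k) (x : Lp ℂ p (wMeasure p ω)) :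
    wEvalCLM p hp hk x = x k :=
  rfl

theorem wEvalCLM_surjective (hp : p ≠ ∞) {k : I} (hk : 0 < ω k) :
    Function.Surjective (wEvalCLM p hp hk) := fun c =>
  ⟨indicatorConstLp p (measurableSet_singleton k) (wMeasure_singleton_ne_top p ω k) c, by
    rw [wEvalCLM_apply, indicatorConstLp_coeFn.apply_eq_of_wMeasure hk]
    simp⟩

end Weighted

theorem shift_pow_apply {p : ℝ≥0∞} [Fact (1 ≤ p)] {ω : ℕ → ℝ}
    {B : Lp ℂ p (wMeasure p ω) →L[ℂ] Lp ℂ p (wMeasure p ω)}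
    (hB : ∀ (x : Lp ℂ p (wMeasure p ω)) (k : ℕ), B x k = x (k + 1))
    (n : ℕ) (x : Lp ℂ p (wMeasure p ω)) (k : ℕ) : (B ^ n) x k = x (n + k) := by
  induction n generalizing x with
  | zero => simp
  | succ n ih => rw [pow_succ, mul_apply_eq_comp, ih, hB, add_right_comm]

theorem liminf_eq_zero_of_forall_exists_lt {u : ℕ → ℝ} (hu : ∀ n, 0 < u n)
    (hsmall : ∀ ε > 0, ∃ n, u n < ε) : liminf u atTop = 0 := by
  have hfreq : ∀ ε > 0, ∃ᶠ n in atTop, u n < ε := by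
    intro ε hε
    rw [frequently_atTop]
    intro N
    -- a `δ > 0` below `ε` and below the finitely many `u k` with `k < N` forces `n ≥ N`
    have hδ : ∀ᶠ δ in 𝓝[>] (0 : ℝ), δ < ε ∧ ∀ k ∈ Finset.range N, δ < u k :=
      nhdsWithin_le_nhds <| (eventually_lt_nhds hε).and <|
        (eventually_all_finset _).2 fun k _ => eventually_lt_nhds (hu k)
    obtain ⟨δ, ⟨hδε, hδu⟩, hδpos⟩ := (hδ.and self_mem_nhdsWithin).exists
    obtain ⟨n, hn⟩ := hsmall δ hδpos
    refine ⟨n, not_lt.1 fun hnN => ?_, hn.trans hδε⟩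
    exact (hn.trans (hδu n (Finset.mem_range.2 hnN))).false
  have hbdd : IsBoundedUnder (· ≥ ·) atTop u := isBoundedUnder_of ⟨0, fun n => (hu n).le⟩
  have hcobdd : IsCoboundedUnder (· ≥ ·) atTop u := ⟨1, fun a ha => by
    obtain ⟨n, hn1, han⟩ := ((hfreq 1 one_pos).and_eventually (eventually_map.1 ha)).exists
    exact han.trans hn1.le⟩
  refine le_antisymm (le_of_forall_pos_le_add fun ε hε => ?_) ?_
  · simpa using liminf_le_of_frequently_le ((hfreq ε hε).mono fun _ => le_of_lt) hbdd
  · exact le_liminf_of_le hcobdd (Eventually.of_forall fun n => (hu n).le)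

theorem stmt5_general (p : ENNReal) [Fact (1 ≤ p)] (hp : p ≠ ∞)
    (ω : ℕ → ℝ) (hω : ∀ k, 0 < ω k)
    (B : Lp ℂ p (wMeasure p ω) →L[ℂ] Lp ℂ p (wMeasure p ω))
    (hB : ∀ (x : Lp ℂ p (wMeasure p ω)) (k : ℕ), B x k = x (k + 1))
    (A : Set (Lp ℂ p (wMeasure p ω))) (hA : Bornology.IsBounded A)
    (hdense : Dense (toWeakSpace ℂ (Lp ℂ p (wMeasure p ω)) ''
      {z : Lp ℂ p (wMeasure p ω) |
        ∃ (n : ℕ) (a : Lp ℂ p (wMeasure p ω)), a ∈ A ∧ z = (B ^ n) a})) :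
    Filter.liminf ω Filter.atTop = 0 := by
  obtain ⟨M, hM⟩ := hA.exists_norm_le
  have hvalues := dense_image_of_dense_toWeakSpace_image hdense
    (wEvalCLM_surjective hp (hω 0)).denseRange
  refine liminf_eq_zero_of_forall_exists_lt hω fun ε hε => ?_
  obtain ⟨_, ⟨_, ⟨n, a, haA, rfl⟩, rfl⟩, hlarge⟩ := hvalues.exists_lt_norm (M / ε)
  rw [wEvalCLM_apply, shift_pow_apply hB, add_zero, div_lt_iff₀ hε] at hlarge
  have hsmall : ‖a n‖ * ω n ≤ M := (Lp.norm_apply_mul_le_norm hp (hω n) a).trans (hM a haA)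
  exact ⟨n, lt_of_mul_lt_mul_left (hsmall.trans_lt hlarge) (norm_nonneg _)⟩

theorem stmt5 (p : ENNReal) [Fact (1 ≤ p)] (hp1 : 1 < p) (hp : p ≠ ∞)
    (ω : ℕ → ℝ) (hω : ∀ k, 0 < ω k)
    (hbdd : ∃ C : ℝ, ∀ n, ω n / ω (n + 1) ≤ C)
    (B : Lp ℂ p (wMeasure p ω) →L[ℂ] Lp ℂ p (wMeasure p ω))
    (hB : ∀ (x : Lp ℂ p (wMeasure p ω)) (k : ℕ), B x k = x (k + 1))
    (A : Set (Lp ℂ p (wMeasure p ω))) (hA : Bornology.IsBounded A)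
    (hdense : Dense (toWeakSpace ℂ (Lp ℂ p (wMeasure p ω)) ''
      {z : Lp ℂ p (wMeasure p ω) |
        ∃ (n : ℕ) (a : Lp ℂ p (wMeasure p ω)), a ∈ A ∧ z = (B ^ n) a})) :
    Filter.liminf ω Filter.atTop = 0 :=
  stmt5_general p hp ω hω B hB A hA hdense
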